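/- If H is a retract of a finite simple graph G, then c_d(H) ≤ c_d(G) for every integer d ≥ 0. -/

import Mathlib

open SimpleGraph Set

namespace CopsRobbers

variable {V : Type}

/-- One step of a player in the game: stay put or move to an adjacent vertex. -/
def Step (G : SimpleGraph V) (a b : V) : Prop := a = b ∨ G.Adj a b

/-- `u` is within graph distance `d` of `v` in `G`. -/
def WithinDist (G : SimpleGraph V) (d : ℕ) (u v : V) : Prop :=
  ∃ w : G.Walk u v, w.length ≤ d

/-- `p` cops have a strategy on `G` that guarantees capturing the robber at distance `d`
within finitely many rounds.  A cop strategy is a function `F` from the history of robber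
positions to the positions of the `p` cops (`F []` gives the initial placement, chosen
before the robber places himself); the robber is modelled by an arbitrary trajectory
`r : ℕ → V` of vertices, each step staying put or moving along an edge.  Capture happens
if after some robber move, or after the cops' reply to it, some cop is within distance
`d` of the robber. -/
def CopsWin (G : SimpleGraph V) (d p : ℕ) : Prop :=
  ∃ F : List V → Fin p → V,
    (∀ (hist : List V) (x : V) (i : Fin p), Step G (F hist i) (F (hist ++ [x]) i)) ∧
    ∀ r : ℕ → V, (∀ n, Step G (r n) (r (n + 1))) →
      ∃ (n : ℕ) (i : Fin p),
        WithinDist G d (F (List.ofFn fun m : Fin n => r m.val) i) (r n) ∨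
        WithinDist G d (F (List.ofFn fun m : Fin (n + 1) => r m.val) i) (r n)

/-- The distance-`d` cop number of `G`: the least number of cops that can guarantee
capture at distance `d`. -/
noncomputable def copNumber (G : SimpleGraph V) (d : ℕ) : ℕ :=
  sInf { p | CopsWin G d p }

end CopsRobbers
namespace CopsRobbers

/-- A drawing of a finite simple graph in the plane: vertices go to distinct points, every
edge `uv` is drawn as a simple arc `arc u v` (parametrised on `[0,1]`, with
`arc v u` the reverse parametrisation) joining the endpoints, avoiding all vertex points
in its interior, any two arcs meet in finitely many points, and no non-vertex point lies
on three or more arcs. -/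
structure PlaneDrawing {V : Type} (G : SimpleGraph V) where
  vpos : V → ℝ × ℝ
  arc : V → V → ℝ → ℝ × ℝ
  vpos_inj : Function.Injective vpos
  arc_symm : ∀ u v, G.Adj u v → ∀ t : ℝ, arc u v t = arc v u (1 - t)
  arc_cont : ∀ u v, G.Adj u v → ContinuousOn (arc u v) (Set.Icc (0:ℝ) 1)
  arc_start : ∀ u v, G.Adj u v → arc u v 0 = vpos u
  arc_end : ∀ u v, G.Adj u v → arc u v 1 = vpos v
  arc_injOn : ∀ u v, G.Adj u v → Set.InjOn (arc u v) (Set.Icc (0:ℝ) 1)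
  arc_avoid : ∀ u v, G.Adj u v → ∀ t ∈ Set.Ioo (0:ℝ) 1, ∀ w, arc u v t ≠ vpos w
  finite_inter : ∀ u v w x, G.Adj u v → G.Adj w x → s(u, v) ≠ s(w, x) →
    (arc u v '' Set.Icc (0:ℝ) 1 ∩ arc w x '' Set.Icc (0:ℝ) 1).Finite
  no_triple : ∀ pt : ℝ × ℝ, pt ∉ Set.range vpos →
    ∀ u₁ v₁ u₂ v₂ u₃ v₃, G.Adj u₁ v₁ → G.Adj u₂ v₂ → G.Adj u₃ v₃ →
      s(u₁, v₁) ≠ s(u₂, v₂) → s(u₁, v₁) ≠ s(u₃, v₃) → s(u₂, v₂) ≠ s(u₃, v₃) →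
      ¬(pt ∈ arc u₁ v₁ '' Set.Icc (0:ℝ) 1 ∧ pt ∈ arc u₂ v₂ '' Set.Icc (0:ℝ) 1 ∧
        pt ∈ arc u₃ v₃ '' Set.Icc (0:ℝ) 1)

namespace PlaneDrawing

variable {V : Type} {G : SimpleGraph V}

/-- The edges `uv` and `wx` cross in the drawing: they are distinct edges sharing a point
interior to both arcs. -/
def Crosses (D : PlaneDrawing G) (u v w x : V) : Prop :=
  G.Adj u v ∧ G.Adj w x ∧ s(u, v) ≠ s(w, x) ∧
    ∃ pt : ℝ × ℝ, pt ∈ D.arc u v '' Set.Ioo (0:ℝ) 1 ∧ pt ∈ D.arc w x '' Set.Ioo (0:ℝ) 1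

/-- `e` is an uncrossed edge of the drawing. -/
def UncrossedE (D : PlaneDrawing G) (e : Sym2 V) : Prop :=
  ∀ a b w x, s(a, b) = e → ¬D.Crosses a b w x

/-- The set of crossing points lying on the edge `uv`. -/
def crossingPointsOn (D : PlaneDrawing G) (u v : V) : Set (ℝ × ℝ) :=
  { pt | pt ∈ D.arc u v '' Set.Ioo (0:ℝ) 1 ∧
      ∃ w x, D.Crosses u v w x ∧ pt ∈ D.arc w x '' Set.Ioo (0:ℝ) 1 }

/-- `pt` is a crossing point of the drawing. -/
def IsCrossingPoint (D : PlaneDrawing G) (pt : ℝ × ℝ) : Prop :=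
  ∃ u v w x, D.Crosses u v w x ∧ pt ∈ D.arc u v '' Set.Ioo (0:ℝ) 1 ∧
    pt ∈ D.arc w x '' Set.Ioo (0:ℝ) 1

/-- The drawing is `k`-plane: every edge is crossed at most `k` times. -/
def KPlane (D : PlaneDrawing G) (k : ℕ) : Prop :=
  ∀ u v, G.Adj u v → (D.crossingPointsOn u v).Finite ∧ (D.crossingPointsOn u v).ncard ≤ k

/-- The drawing is 1-plane: every edge is crossed at most once, and (as usual) no two
edges sharing an endpoint cross, so every crossing has four distinct endpoints. -/
def OnePlane (D : PlaneDrawing G) : Prop :=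
  D.KPlane 1 ∧ ∀ u v w x, D.Crosses u v w x → u ≠ w ∧ u ≠ x ∧ v ≠ w ∧ v ≠ x

/-- The parameter `X(G)` of the drawing: the least `n` such that for every crossing,
every pair of consecutive endpoints is joined by a path of length at most `n`. -/
noncomputable def Xparam (D : PlaneDrawing G) : ℕ :=
  sInf { n | ∀ u v w x, D.Crosses u v w x → ∀ a b : V, (a = u ∨ a = v) → (b = w ∨ b = x) →
    ∃ p : G.Walk a b, p.length ≤ n }

/-- The parameter `x(G)` of the drawing: the least `n` such that for every crossing,
some pair of consecutive endpoints is joined by a path of length at most `n`. -/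
noncomputable def xparam (D : PlaneDrawing G) : ℕ :=
  sInf { n | ∀ u v w x, D.Crosses u v w x → ∃ a b : V, (a = u ∨ a = v) ∧ (b = w ∨ b = x) ∧
    ∃ p : G.Walk a b, p.length ≤ n }

/-- The subset of the plane covered by the drawing. -/
def image (D : PlaneDrawing G) : Set (ℝ × ℝ) :=
  Set.range D.vpos ∪ ⋃ (u : V) (v : V) (_ : G.Adj u v), D.arc u v '' Set.Icc (0:ℝ) 1

/-- Faces of the drawing: connected components of the complement. -/
def IsFace (D : PlaneDrawing G) (F : Set (ℝ × ℝ)) : Prop :=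
  ∃ z ∉ D.image, F = connectedComponentIn D.imageᶜ z

/-- The subset of the plane covered by the arc of the (unordered) edge `e`. -/
def edgeArcSet (D : PlaneDrawing G) (e : Sym2 V) : Set (ℝ × ℝ) :=
  ⋃ (a : V) (b : V) (_ : G.Adj a b) (_ : s(a, b) = e), D.arc a b '' Set.Icc (0:ℝ) 1

/-- The skeleton of the drawing: the subgraph consisting of all uncrossed edges. -/
def skeleton (D : PlaneDrawing G) : SimpleGraph V where
  Adj u v := G.Adj u v ∧ D.UncrossedE s(u, v)
  symm := ⟨by
    intro u v h
    refine ⟨h.1.symm, ?_⟩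
    rw [Sym2.eq_swap]
    exact h.2⟩
  loopless := ⟨fun v h => G.irrefl h.1⟩

/-- The subset of the plane covered by the drawing of the skeleton. -/
def skelImage (D : PlaneDrawing G) : Set (ℝ × ℝ) :=
  ⋃ (u : V) (v : V) (_ : G.Adj u v) (_ : D.UncrossedE s(u, v)), D.arc u v '' Set.Icc (0:ℝ) 1

/-- Faces of the skeleton: connected components of the complement of its drawing. -/
def IsSkelFace (D : PlaneDrawing G) (F : Set (ℝ × ℝ)) : Prop :=
  ∃ z ∉ D.skelImage, F = connectedComponentIn D.skelImageᶜ z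

/-- `κ` is a kite path for the crossing of `uv` and `wx` joining the consecutive
endpoints `u` and `w`: a shortest `(u,w)`-path all of whose edges are uncrossed and whose
internal vertices have degree `2`, such that the part of the arc of `uv` from `u` to the
crossing point, the arcs of `κ`, and the part of the arc of `wx` from the crossing point
to `w` together bound a face of the drawing. -/
def IsKitePath (D : PlaneDrawing G) (u v w x : V) (κ : G.Walk u w) : Prop :=
  D.Crosses u v w x ∧ κ.IsPath ∧ (∀ q : G.Walk u w, κ.length ≤ q.length) ∧
  (∀ e ∈ κ.edges, D.UncrossedE e) ∧
  (∀ y ∈ κ.support, y ≠ u → y ≠ w → (G.neighborSet y).ncard = 2) ∧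
  ∃ t s' : ℝ, t ∈ Set.Ioo (0:ℝ) 1 ∧ s' ∈ Set.Ioo (0:ℝ) 1 ∧ D.arc u v t = D.arc w x s' ∧
    ∃ F, D.IsFace F ∧
      frontier F = (D.arc u v '' Set.Icc 0 t) ∪ (⋃ e ∈ κ.edges, D.edgeArcSet e) ∪
        (D.arc w x '' Set.Icc 0 s')

/-- The drawing is kite-augmented: for every crossing and every pair of consecutive
endpoints there is a kite path joining them. -/
def KiteAugmented (D : PlaneDrawing G) : Prop :=
  ∀ u v w x, D.Crosses u v w x → ∃ κ : G.Walk u w, D.IsKitePath u v w x κ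

/-- The face-distance between any two distinct crossing points of the drawing is at
least `f`: every chain of faces `Fc 0, …, Fc (j-1)` linked by vertex or crossing points
`pts 0 = c₁, pts 1, …, pts j = c₂` on the boundaries of consecutive faces (i.e. every
path in the radial graph between the two crossing points) uses at least `f` faces. -/
def FaceDistGe (D : PlaneDrawing G) (f : ℕ) : Prop :=
  ∀ c₁ c₂ : ℝ × ℝ, D.IsCrossingPoint c₁ → D.IsCrossingPoint c₂ → c₁ ≠ c₂ →
    ∀ (j : ℕ) (Fc : Fin j → Set (ℝ × ℝ)) (pts : Fin (j + 1) → ℝ × ℝ),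
      (∀ i, D.IsFace (Fc i)) →
      (∀ i, pts i ∈ Set.range D.vpos ∨ D.IsCrossingPoint (pts i)) →
      pts 0 = c₁ → pts (Fin.last j) = c₂ →
      (∀ i : Fin j, pts i.castSucc ∈ frontier (Fc i) ∧ pts i.succ ∈ frontier (Fc i)) →
      f ≤ j

end PlaneDrawing

end CopsRobbers
namespace CopsRobbers

/-- `H` is (a copy of) the `k`-subdivision `G^(k)` of `G`: `φ` embeds the vertices of `G`
into those of `H`, and for every ordered adjacent pair `u v` of `G`, the vertices
`p u v 0, p u v 1, …, p u v k` form the path of length `k` of `H` replacing the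
edge `uv` (traversed in the opposite direction for `p v u`); the interior vertices
of these paths are fresh and pairwise disjoint for distinct edges, the edges of `H` are
exactly the edges of these paths, and every vertex of `H` arises from `G` or from a
path. -/
structure IsKSubdivision {V W : Type} (G : SimpleGraph V) (k : ℕ) (H : SimpleGraph W)
    (φ : V → W) (p : V → V → ℕ → W) : Prop where
  phi_inj : Function.Injective φ
  start : ∀ u v, G.Adj u v → p u v 0 = φ u
  finish : ∀ u v, G.Adj u v → p u v k = φ v
  rev : ∀ u v, G.Adj u v → ∀ i ≤ k, p u v i = p v u (k - i)
  inj : ∀ u v, G.Adj u v → ∀ i ≤ k, ∀ j ≤ k, p u v i = p u v j → i = j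
  internal : ∀ u v, G.Adj u v → ∀ i, 0 < i → i < k → p u v i ∉ Set.range φ
  disjoint : ∀ u v u' v', G.Adj u v → G.Adj u' v' → s(u, v) ≠ s(u', v') →
    ∀ i j, 0 < i → i < k → 0 < j → j < k → p u v i ≠ p u' v' j
  adj_iff : ∀ a b : W, H.Adj a b ↔ ∃ u v, ∃ _ : G.Adj u v, ∃ i < k,
    (a = p u v i ∧ b = p u v (i + 1)) ∨ (b = p u v i ∧ a = p u v (i + 1))
  cover : ∀ w : W, (∃ v, w = φ v) ∨ ∃ u v, ∃ _ : G.Adj u v, ∃ i ≤ k, w = p u v i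

/-- `H` together with its drawing `DH` is the subdivision `G^(k)` of the drawn graph
`(G, D)`, drawn by placing the subdivision vertices of each edge on its arc, so that the
crossings of `G^(k)` are exactly the crossings of `G`, occurring between subdivision
edges. -/
structure IsDrawnSubdivision {V W : Type} (G : SimpleGraph V) (D : PlaneDrawing G)
    (k : ℕ) (H : SimpleGraph W) (DH : PlaneDrawing H) (φ : V → W)
    (p : V → V → ℕ → W) : Prop where
  sub : IsKSubdivision G k H φ p
  vpos_eq : ∀ v, DH.vpos (φ v) = D.vpos v
  on_arc : ∀ u v, G.Adj u v → ∀ i ≤ k, DH.vpos (p u v i) ∈ D.arc u v '' Set.Icc (0:ℝ) 1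
  arcs_cover : ∀ u v, G.Adj u v →
    (⋃ i ∈ Finset.range k, DH.edgeArcSet s(p u v i, p u v (i + 1))) =
      D.arc u v '' Set.Icc (0:ℝ) 1
  cross_of : ∀ a b c e, DH.Crosses a b c e →
    ∃ u v w x, D.Crosses u v w x ∧ ∃ i < k, ∃ j < k,
      s(a, b) = s(p u v i, p u v (i + 1)) ∧ s(c, e) = s(p w x j, p w x (j + 1))
  of_cross : ∀ u v w x, D.Crosses u v w x → ∃ i < k, ∃ j < k,
      DH.Crosses (p u v i) (p u v (i + 1)) (p w x j) (p w x (j + 1))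

/-- `(H, DH)` is a 1-planarisation of the drawn graph `(G, D)`: a drawn subdivision
`G^(k)` of `G` whose drawing is 1-plane. -/
structure IsOnePlanarisation {V W : Type} (G : SimpleGraph V) (D : PlaneDrawing G)
    (k : ℕ) (H : SimpleGraph W) (DH : PlaneDrawing H) (φ : V → W)
    (p : V → V → ℕ → W) : Prop where
  drawn : IsDrawnSubdivision G D k H DH φ p
  oneplane : DH.OnePlane

/-- `(K, DK)` is the kite-augmentation of the 1-plane drawn graph `(H, DH)` via the
embedding `ψ`: the drawing of `H` is kept unchanged, and for every crossing and every
pair of consecutive endpoints a new path with fresh internal vertices, of length equal to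
the distance of the two endpoints in `H`, is added and drawn so that the resulting
drawing is a kite-augmented 1-plane drawing with the same crossings. -/
structure IsKiteAugmentationOf {W U : Type} {H : SimpleGraph W} (DH : PlaneDrawing H)
    {K : SimpleGraph U} (DK : PlaneDrawing K) (ψ : W → U) : Prop where
  inj : Function.Injective ψ
  adj_iff : ∀ a b, K.Adj (ψ a) (ψ b) ↔ H.Adj a b
  vpos_eq : ∀ a, DK.vpos (ψ a) = DH.vpos a
  arc_eq : ∀ a b, H.Adj a b → ∀ t ∈ Set.Icc (0:ℝ) 1, DK.arc (ψ a) (ψ b) t = DH.arc a b t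
  oneplane : DK.OnePlane
  kite : DK.KiteAugmented
  new_path : ∀ u v w x, DH.Crosses u v w x →
    ∃ κ : K.Walk (ψ u) (ψ w), κ.IsPath ∧ κ.length = H.dist u w ∧
      ∀ y ∈ κ.support, y ≠ ψ u → y ≠ ψ w → y ∉ Set.range ψ
  new_deg : ∀ z : U, z ∉ Set.range ψ → (K.neighborSet z).ncard = 2
  cross_of : ∀ a b c e, DK.Crosses a b c e →
    ∃ u v w x, DH.Crosses u v w x ∧ s(a, b) = s(ψ u, ψ v) ∧ s(c, e) = s(ψ w, ψ x)

end CopsRobbers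


/-! The cops on a retract `H` of `G` play the image under the retraction `g` of a winning
strategy on `G`, run against the robber's own trajectory viewed inside `G`. Since `g` is a
homomorphism it does not increase distances, and since it fixes `H` the robber's position is
unchanged, so every capture in `G` projects to a capture in `H`. -/

namespace CopsRobbers

variable {V W : Type} {G : SimpleGraph V} {G' : SimpleGraph W}

theorem Step.map (g : G →g G') {a b : V} (h : Step G a b) : Step G' (g a) (g b) :=
  h.imp (congrArg g) g.map_adj

theorem WithinDist.map (g : G →g G') {d : ℕ} {u v : V} (h : WithinDist G d u v) :
    WithinDist G' d (g u) (g v) :=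
  let ⟨w, hw⟩ := h
  ⟨w.map g, (w.length_map g).trans_le hw⟩

theorem copsWin_fintype_card [Fintype V] (G : SimpleGraph V) (d : ℕ) :
    CopsWin G d (Fintype.card V) := by
  let e := Fintype.equivFin V
  refine ⟨fun _ i => e.symm i, fun _ _ _ => Or.inl rfl, fun r _ => ⟨0, e (r 0), Or.inl ?_⟩⟩
  show WithinDist G d (e.symm (e (r 0))) (r 0)
  rw [e.symm_apply_apply]
  exact ⟨.nil, Nat.zero_le d⟩

theorem copsWin_copNumber [Fintype V] (G : SimpleGraph V) (d : ℕ) :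
    CopsWin G d (copNumber G d) :=
  Nat.sInf_mem (s := { p | CopsWin G d p }) ⟨_, copsWin_fintype_card G d⟩

theorem CopsWin.of_retract (ι : G' →g G) (g : G →g G') (hgι : ∀ v, g (ι v) = v) {d p : ℕ}
    (hwin : CopsWin G d p) : CopsWin G' d p := by
  obtain ⟨F, hstep, hcapture⟩ := hwin
  refine ⟨fun hist i => g (F (hist.map ι) i), fun hist x i => ?_, fun r hr => ?_⟩
  · simpa only [List.map_append, List.map_cons, List.map_nil] using
      (hstep (hist.map ι) (ι x) i).map g
  · have hist_map : ∀ n, (List.ofFn fun m : Fin n => r m).map ι =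
        List.ofFn fun m : Fin n => ι (r m) := fun _ => List.map_ofFn
    obtain ⟨n, i, hn⟩ := hcapture (fun n => ι (r n)) fun n => (hr n).map ι
    refine ⟨n, i, ?_⟩
    simp only [hist_map]
    rw [← hgι (r n)]
    exact hn.imp (WithinDist.map g) (WithinDist.map g)

end CopsRobbers

open CopsRobbers in
/-- If `H` is a retract of a finite simple graph `G`, then `c_d(H) ≤ c_d(G)` for every
`d ≥ 0`. -/
theorem statement1 {V : Type} [Fintype V] (G : SimpleGraph V) (H : G.Subgraph)
    (f : V → V)
    (hmem : ∀ v, f v ∈ H.verts)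
    (hid : ∀ v ∈ H.verts, f v = v)
    (hhom : ∀ u v, G.Adj u v → H.Adj (f u) (f v))
    (d : ℕ) :
    copNumber H.coe d ≤ copNumber G d := by
  let retraction : G →g H.coe := ⟨fun v => ⟨f v, hmem v⟩, fun {u v} h => hhom u v h⟩
  have hretract : ∀ v, retraction (H.hom v) = v := fun v => Subtype.ext (hid v v.2)
  exact Nat.sInf_le ((copsWin_copNumber G d).of_retract H.hom retraction hretract)
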